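/- Let U ⊆ ℂ be a domain and F : U × U → ℂ holomorphic in two variables. If F(z, conj z) = 0 for all z in some nonempty open subset of U whose conjugate is contained in U, then F vanishes identically on U × U (assuming U × U is connected, e.g. U connected). -/

import Mathlib

/-!
Substituting `F (a + b i, a - b i)` turns the totally real set `{(w, conj w)}` into the real
points `ℝ² ⊂ ℂ²`. A holomorphic function of two variables vanishing at the real points of a
polydisc vanishes on the polydisc: apply the one-variable identity principle first in `a` for
each real `b`, then in `b`. So `F` vanishes near `(z₀, conj z₀)` for any `z₀ ∈ s`, and the
identity principle on the connected set `U ×ˢ U` finishes the proof.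
-/

open Complex ComplexConjugate Filter Metric Set Topology

variable {E : Type*} [NormedAddCommGroup E] [NormedSpace ℂ E]

theorem AnalyticOnNhd.eqOn_zero_of_preconnected_of_eventually_ofReal_eq_zero {g : ℂ → E}
    {U : Set ℂ} (hg : AnalyticOnNhd ℂ g U) (hU : IsPreconnected U) {x : ℝ} (hx : (x : ℂ) ∈ U)
    (h : ∀ᶠ t : ℝ in 𝓝 x, g t = 0) : EqOn g 0 U := by
  have hofReal : Tendsto ((↑) : ℝ → ℂ) (𝓝[≠] x) (𝓝[≠] (x : ℂ)) :=
    tendsto_nhdsWithin_of_tendsto_nhds_of_eventually_within _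
      ((continuous_ofReal.tendsto x).mono_left nhdsWithin_le_nhds)
      (eventually_nhdsWithin_of_forall fun _ ht => ofReal_injective.ne ht)
  exact hg.eqOn_zero_of_preconnected_of_frequently_eq_zero hU hx
    (hofReal.frequently (h.filter_mono nhdsWithin_le_nhds).frequently)

theorem AnalyticOnNhd.eqOn_zero_prod_of_eventually_ofReal_eq_zero {f : ℂ × ℂ → E}
    {U V : Set ℂ} (hf : AnalyticOnNhd ℂ f (U ×ˢ V)) (hU : IsPreconnected U)
    (hV : IsPreconnected V) {x y : ℝ} (hx : (x : ℂ) ∈ U) (hy : V ∈ 𝓝 (y : ℂ))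
    (h : ∀ᶠ p : ℝ × ℝ in 𝓝 (x, y), f (p.1, p.2) = 0) : EqOn f 0 (U ×ˢ V) := by
  rw [nhds_prod_eq] at h
  obtain ⟨P, hP, Q, hQ, hPQ⟩ := eventually_prod_iff.1 h
  have hrow : ∀ᶠ u : ℝ in 𝓝 y, ∀ a ∈ U, f (a, u) = 0 := by
    filter_upwards [hQ, continuous_ofReal.continuousAt.preimage_mem_nhds hy] with u hu huV a ha
    have hana : AnalyticOnNhd ℂ (fun a => f (a, u)) U :=
      fun a ha => (hf (a, u) ⟨ha, huV⟩).comp₂ analyticAt_id analyticAt_const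
    exact hana.eqOn_zero_of_preconnected_of_eventually_ofReal_eq_zero hU hx
      (hP.mono fun t ht => hPQ ht hu) ha
  rintro ⟨a, b⟩ ⟨ha, hb⟩
  have hana : AnalyticOnNhd ℂ (fun b => f (a, b)) V :=
    fun b hb => (hf (a, b) ⟨ha, hb⟩).comp₂ analyticAt_const analyticAt_id
  exact hana.eqOn_zero_of_preconnected_of_eventually_ofReal_eq_zero hV (mem_of_mem_nhds hy)
    (hrow.mono fun u hu => hu a ha) hb

variable [CompleteSpace E]

theorem AnalyticAt.eventuallyEq_zero_of_eventually_ofReal_eq_zero {f : ℂ × ℂ → E} {x y : ℝ}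
    (hf : AnalyticAt ℂ f ((x : ℂ), (y : ℂ)))
    (h : ∀ᶠ p : ℝ × ℝ in 𝓝 (x, y), f (p.1, p.2) = 0) : f =ᶠ[𝓝 ((x : ℂ), (y : ℂ))] 0 := by
  obtain ⟨ε, hε, hball⟩ := hf.exists_ball_analyticOnNhd
  rw [← ball_prod_same] at hball
  filter_upwards [ball_mem_nhds _ hε] with p hp
  rw [← ball_prod_same] at hp
  exact hball.eqOn_zero_prod_of_eventually_ofReal_eq_zero (convex_ball _ _).isPreconnected
    (convex_ball _ _).isPreconnected (mem_ball_self hε) (ball_mem_nhds _ hε) h hp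

theorem AnalyticAt.eventuallyEq_zero_of_eventually_conj_eq_zero {F : ℂ × ℂ → E} {z : ℂ}
    (hF : AnalyticAt ℂ F (z, conj z)) (h : ∀ᶠ w in 𝓝 z, F (w, conj w) = 0) :
    F =ᶠ[𝓝 (z, conj z)] 0 := by
  let L : ℂ × ℂ → ℂ × ℂ := fun p => (p.1 + p.2 * I, p.1 - p.2 * I)
  let M : ℂ × ℂ → ℂ × ℂ := fun p => ((p.1 + p.2) / 2, (p.1 - p.2) / (2 * I))
  have hLM (p : ℂ × ℂ) : L (M p) = p := by
    ext <;> simp only [L, M] <;> field_simp <;> ring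
  have hLz : L ((z.re : ℂ), (z.im : ℂ)) = (z, conj z) := by
    ext
    · exact re_add_im z
    · simp only [L]
      rw [re_eq_add_conj, im_eq_sub_conj]
      field_simp
      ring
  have hMz : M (z, conj z) = ((z.re : ℂ), (z.im : ℂ)) := by
    simp only [M, re_eq_add_conj, im_eq_sub_conj]
  have hL : AnalyticAt ℂ L ((z.re : ℂ), (z.im : ℂ)) :=
    (analyticAt_fst.add (analyticAt_snd.mul analyticAt_const)).prod
      (analyticAt_fst.sub (analyticAt_snd.mul analyticAt_const))
  have hreal : ∀ᶠ p : ℝ × ℝ in 𝓝 (z.re, z.im), (F ∘ L) (p.1, p.2) = 0 := by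
    have hw : Tendsto (fun p : ℝ × ℝ => (p.1 + p.2 * I : ℂ)) (𝓝 (z.re, z.im)) (𝓝 z) := by
      conv_rhs => rw [← re_add_im z]
      exact (by fun_prop : Continuous fun p : ℝ × ℝ => (p.1 + p.2 * I : ℂ)).tendsto _
    filter_upwards [hw.eventually h] with p hp
    simpa [L, sub_eq_add_neg] using hp
  have hM : Tendsto M (𝓝 (z, conj z)) (𝓝 ((z.re : ℂ), (z.im : ℂ))) :=
    hMz ▸ (by fun_prop : Continuous M).tendsto _
  filter_upwards [hM.eventually
    (((hLz ▸ hF).comp hL).eventuallyEq_zero_of_eventually_ofReal_eq_zero hreal)] with p hp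
  simpa [hLM] using hp

theorem two_variable_identity_principle_general
    (U : Set ℂ) (hUconn : IsConnected U)
    (F : ℂ × ℂ → ℂ) (hF : AnalyticOnNhd ℂ F (U ×ˢ U))
    (s : Set ℂ) (hs : IsOpen s) (hsne : s.Nonempty) (hsU : s ⊆ U)
    (hsconjU : (fun z => (starRingEnd ℂ) z) '' s ⊆ U)
    (hvanish : ∀ z ∈ s, F (z, (starRingEnd ℂ) z) = 0) :
    ∀ z ∈ U, ∀ w ∈ U, F (z, w) = 0 := by
  obtain ⟨z₀, hz₀⟩ := hsne
  have hz₀U : (z₀, conj z₀) ∈ U ×ˢ U := ⟨hsU hz₀, hsconjU ⟨z₀, hz₀, rfl⟩⟩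
  have hnear : F =ᶠ[𝓝 (z₀, conj z₀)] 0 :=
    (hF _ hz₀U).eventuallyEq_zero_of_eventually_conj_eq_zero
      (eventually_of_mem (hs.mem_nhds hz₀) hvanish)
  intro z hz w hw
  exact hF.eqOn_zero_of_preconnected_of_eventuallyEq_zero
    (hUconn.isPreconnected.prod hUconn.isPreconnected) hz₀U hnear ⟨hz, hw⟩

/-- Identity principle for two complex variables: if `F` is holomorphic on `U × U`
with `U` a domain and `F(z, conj z) = 0` on a nonempty open subset of `U` whose
conjugate lies in `U`, then `F` vanishes identically on `U × U`. -/
theorem two_variable_identity_principle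
    (U : Set ℂ) (hU : IsOpen U) (hUconn : IsConnected U)
    (F : ℂ × ℂ → ℂ) (hF : AnalyticOnNhd ℂ F (U ×ˢ U))
    (s : Set ℂ) (hs : IsOpen s) (hsne : s.Nonempty) (hsU : s ⊆ U)
    (hsconjU : (fun z => (starRingEnd ℂ) z) '' s ⊆ U)
    (hvanish : ∀ z ∈ s, F (z, (starRingEnd ℂ) z) = 0) :
    ∀ z ∈ U, ∀ w ∈ U, F (z, w) = 0 :=
  two_variable_identity_principle_general U hUconn F hF s hs hsne hsU hsconjU hvanish
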